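/- For every formal power series g ∈ ℚ[[t]] with constant term 1, ℰ(ℒ(g)) = g. -/

import Mathlib

open PowerSeries

/-- Substitution of `t^m` for `t` in a formal power series: `(substPow m f) = f(t^m)`.
(For `m ≥ 1`, the coefficient of `t^n` in `f(t^m)` is the coefficient of `t^{n/m}` in `f`
when `m ∣ n`, and `0` otherwise.) -/
noncomputable def substPow (m : ℕ) (f : PowerSeries ℚ) : PowerSeries ℚ :=
  PowerSeries.mk fun n => if m ∣ n then PowerSeries.coeff (n / m) f else 0

/-- The coefficientwise sum `∑_{m=1}^∞ g m` of a family of power series in which the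
`m`-th member has order `≥ m`: its `n`-th coefficient is `∑_{m=1}^{n}` of the `n`-th
coefficients (higher terms contribute nothing since `g m` has order `≥ m`). -/
noncomputable def seriesSum (g : ℕ → PowerSeries ℚ) : PowerSeries ℚ :=
  PowerSeries.mk fun n => ∑ m ∈ Finset.Icc 1 n, PowerSeries.coeff n (g m)

/-- Formal exponential `exp(h) = ∑_{k≥0} h^k / k!` of a power series `h` with zero
constant term (so that `h^k` has order `≥ k` and the sum converges coefficientwise). -/
noncomputable def expS (h : PowerSeries ℚ) : PowerSeries ℚ :=
  PowerSeries.mk fun n =>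
    ∑ k ∈ Finset.range (n + 1), (Nat.factorial k : ℚ)⁻¹ * PowerSeries.coeff n (h ^ k)

/-- Formal logarithm `log(1 + h) = ∑_{k≥1} (−1)^{k+1} h^k / k` for a power series `h`
with zero constant term. -/
noncomputable def logS (h : PowerSeries ℚ) : PowerSeries ℚ :=
  PowerSeries.mk fun n =>
    ∑ k ∈ Finset.Icc 1 n, ((-1 : ℚ) ^ (k + 1) / k) * PowerSeries.coeff n (h ^ k)

/-- The operator `ℰ(f) = exp(∑_{m=1}^∞ (1/m)·f(t^m))`. -/
noncomputable def calE (f : PowerSeries ℚ) : PowerSeries ℚ :=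
  expS (seriesSum fun m => (m : ℚ)⁻¹ • substPow m f)

/-- The operator `ℒ(g) = ∑_{n=1}^∞ (μ(n)/n)·log g(t^n)`. -/
noncomputable def calL (g : PowerSeries ℚ) : PowerSeries ℚ :=
  seriesSum fun n =>
    ((ArithmeticFunction.moebius n : ℚ) / n) • logS (substPow n g - 1)


/-!
Write `ψ f = ∑ₘ (1/m) f(t^m)`, so that `ℰ = exp ∘ ψ`. Multiplying the `k`-th coefficient by `k`
turns `ψ` and `f ↦ ∑ₙ (μ(n)/n) f(t^n)` into Dirichlet convolution with `ζ` and with `μ`, so they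
are mutually inverse; as `log` commutes with `t ↦ t^n`, this gives `ψ (ℒ g) = log g`. It remains
that `exp (log (1 + X)) = 1 + X`: the left side `G` satisfies `G' = G u` with
`u = log' (1 + X) = (1 + X)⁻¹`, hence `(G u)' = 0` and `G u = 1`.
-/

open Finset

namespace PowerSeries

variable {R : Type*} [CommRing R]

theorem coeff_pow_eq_zero_of_lt {h : R⟦X⟧} (hh : constantCoeff h = 0) {n k : ℕ} (hnk : n < k) :
    coeff n (h ^ k) = 0 :=
  coeff_of_lt_order n ((Nat.cast_lt.2 hnk).trans_le (le_order_pow_of_constantCoeff_eq_zero k hh))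

theorem coeff_subst_eq_sum_range {h : R⟦X⟧} (hh : constantCoeff h = 0) (f : R⟦X⟧) (n : ℕ) :
    coeff n (f.subst h) = ∑ d ∈ range (n + 1), coeff d f * coeff n (h ^ d) := by
  rw [coeff_subst' (HasSubst.of_constantCoeff_zero' hh)]
  refine finsum_eq_sum_of_support_subset _ fun d hd => ?_
  rw [coe_range, Set.mem_Iio]
  by_contra! hdn
  exact hd (by simp only [coeff_pow_eq_zero_of_lt hh hdn, smul_zero])

variable {A : Type*} [CommRing A] [Algebra ℚ A]

theorem one_add_X_mul_derivative_log : (1 + X) * d⁄dX A (log A) = 1 := by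
  ext n
  rw [deriv_log, add_mul, one_mul, map_add]
  cases n with
  | zero => simp
  | succ n => simp [coeff_succ_X_mul, pow_succ]

theorem exp_subst_log : (exp A).subst (log A) = 1 + X := by
  have := IsAddTorsionFree.of_module_rat A
  set G := (exp A).subst (log A)
  set u := d⁄dX A (log A)
  have hu : (1 + X) * u = 1 := one_add_X_mul_derivative_log
  have hu' : d⁄dX A u = -u ^ 2 := by
    have h := congrArg (d⁄dX A) hu
    simp only [Derivation.leibniz, smul_eq_mul, map_add, Derivation.map_one_eq_zero,
      derivative_X] at h
    linear_combination u * h - d⁄dX A u * hu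
  have hG : d⁄dX A G = G * u := by
    rw [derivative_subst HasSubst.log, derivative_exp]
  have hGu : G * u = 1 := by
    refine derivative.ext ?_ ?_
    · simp only [Derivation.leibniz, smul_eq_mul, hG, hu', Derivation.map_one_eq_zero]
      ring
    · rw [map_mul, ← coeff_zero_eq_constantCoeff_apply, coeff_subst_eq_sum_range constantCoeff_log]
      simp [u, deriv_log]
  calc G = G * ((1 + X) * u) := by rw [hu, mul_one]
    _ = (1 + X) * (G * u) := by ring
    _ = 1 + X := by rw [hGu, mul_one]

end PowerSeries

section

variable {h : ℚ⟦X⟧}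

theorem substPow_eq_expand {m : ℕ} (hm : m ≠ 0) (f : ℚ⟦X⟧) : substPow m f = expand m hm f := by
  ext n
  simp [substPow, coeff_expand]

theorem expS_eq_subst (hh : constantCoeff h = 0) : expS h = (exp ℚ).subst h := by
  refine PowerSeries.ext fun n => ?_
  rw [expS, coeff_mk, coeff_subst_eq_sum_range hh]
  simp [coeff_exp]

theorem logS_eq_subst (hh : constantCoeff h = 0) : logS h = (log ℚ).subst h := by
  refine PowerSeries.ext fun n => ?_
  rw [logS, coeff_mk, coeff_subst_eq_sum_range hh]
  refine (sum_congr rfl fun k hk => ?_).trans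
    (sum_subset (fun k hk => by simp only [mem_Icc, mem_range] at hk ⊢; omega) fun k hk hk' => ?_)
  · simp [show k ≠ 0 by simp only [mem_Icc] at hk; omega]
  · simp [show k = 0 by simp only [mem_Icc, mem_range] at hk hk'; omega]

theorem constantCoeff_logS (h : ℚ⟦X⟧) : constantCoeff (logS h) = 0 := by
  rw [← coeff_zero_eq_constantCoeff_apply]
  simp [logS]

theorem expS_logS (hh : constantCoeff h = 0) : expS (logS h) = 1 + h := by
  rw [expS_eq_subst (constantCoeff_logS h), logS_eq_subst hh,
    ← subst_comp_subst_apply HasSubst.log (HasSubst.of_constantCoeff_zero' hh), exp_subst_log,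
    ← coe_substAlgHom (HasSubst.of_constantCoeff_zero' hh), map_add, map_one, substAlgHom_X]

theorem logS_expand (hh : constantCoeff h = 0) {m : ℕ} (hm : m ≠ 0) :
    logS (expand m hm h) = expand m hm (logS h) := by
  rw [logS_eq_subst hh, logS_eq_subst (by rwa [constantCoeff_expand])]
  exact (expand_subst m hm (HasSubst.of_constantCoeff_zero' hh) (log ℚ)).symm

end

theorem seriesSum_congr {f g : ℕ → ℚ⟦X⟧} (h : ∀ m, m ≠ 0 → f m = g m) :
    seriesSum f = seriesSum g := by
  ext n
  simp only [seriesSum, coeff_mk]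
  exact sum_congr rfl fun m hm => by rw [h m (by simp only [mem_Icc] at hm; omega)]

theorem coeff_seriesSum_smul_substPow (c : ℕ → ℚ) (f : ℚ⟦X⟧) (n : ℕ) :
    coeff n (seriesSum fun m => c m • substPow m f) = ∑ m ∈ n.divisors, c m * coeff (n / m) f := by
  simp only [seriesSum, substPow, coeff_mk, LinearMap.map_smul, smul_eq_mul, mul_ite, mul_zero]
  rw [Nat.divisors, ← Ico_add_one_right_eq_Icc, sum_filter]

theorem calL_eq_seriesSum {g : ℚ⟦X⟧} (hg : constantCoeff g = 1) :
    calL g = seriesSum fun n =>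
      ((ArithmeticFunction.moebius n : ℚ) / n) • substPow n (logS (g - 1)) := by
  have hh : constantCoeff (g - 1) = 0 := by simp [hg]
  refine seriesSum_congr fun n hn => ?_
  rw [substPow_eq_expand hn, substPow_eq_expand hn, ← logS_expand hh, map_sub, map_one]

open ArithmeticFunction ArithmeticFunction.Moebius in
theorem seriesSum_inv_smul_substPow_moebius {f : ℚ⟦X⟧} (hf : constantCoeff f = 0) :
    seriesSum (fun m => (m : ℚ)⁻¹ • substPow m
      (seriesSum fun n => ((μ n : ℚ) / n) • substPow n f)) = f := by
  set c := seriesSum fun n => ((μ n : ℚ) / n) • substPow n f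
  have hc : ∀ k : ℕ, k > 0 → ∑ i ∈ k.divisors, (i : ℚ) * coeff i c = k * coeff k f := by
    refine sum_eq_iff_sum_mul_moebius_eq.2 fun k hk => ?_
    rw [coeff_seriesSum_smul_substPow, Nat.sum_divisorsAntidiagonal
      (fun a b => (μ a : ℚ) * (b * coeff b f)), mul_sum]
    refine sum_congr rfl fun n hn => ?_
    have hnk := Nat.dvd_of_mem_divisors hn
    have hn0 : (n : ℚ) ≠ 0 := Nat.cast_ne_zero.2 (Nat.pos_of_mem_divisors hn).ne'
    rw [Nat.cast_div hnk hn0]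
    field_simp
  refine PowerSeries.ext fun k => ?_
  rcases k.eq_zero_or_pos with rfl | hk
  · simp [coeff_seriesSum_smul_substPow, hf]
  have hk0 : (k : ℚ) ≠ 0 := Nat.cast_ne_zero.2 hk.ne'
  calc coeff k (seriesSum fun m => (m : ℚ)⁻¹ • substPow m c)
      = (k : ℚ)⁻¹ * ∑ m ∈ k.divisors, ((k / m : ℕ) : ℚ) * coeff (k / m) c := by
        rw [coeff_seriesSum_smul_substPow, mul_sum]
        refine sum_congr rfl fun m hm => ?_
        have hm0 : (m : ℚ) ≠ 0 := Nat.cast_ne_zero.2 (Nat.pos_of_mem_divisors hm).ne'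
        rw [Nat.cast_div (Nat.dvd_of_mem_divisors hm) hm0]
        field_simp
    _ = coeff k f := by
        rw [Nat.sum_div_divisors k fun i => (i : ℚ) * coeff i c, hc k hk, inv_mul_cancel_left₀ hk0]

/-- For every formal power series `g ∈ ℚ[[t]]` with constant term `1`, `ℰ(ℒ(g)) = g`. -/
theorem calE_calL (g : PowerSeries ℚ) (hg : PowerSeries.constantCoeff g = 1) :
    calE (calL g) = g := by
  have hh : constantCoeff (g - 1) = 0 := by simp [hg]
  rw [calE, calL_eq_seriesSum hg, seriesSum_inv_smul_substPow_moebius (constantCoeff_logS _),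
    expS_logS hh, add_sub_cancel]
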